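/- arXiv:1705.00238 — 5 statements merged into one kernel-verified Lean document; each statement's English description precedes it below -/
import Mathlib

section
/- Let e₀ < E₂ ≤ E₁ ≤ e₁ and a₀ ∈ [0,1]. With α = √((E₂-e₀)/(E₁-e₀)) and β = √(α²a₀²+(1-α²)) - αa₀, and assuming a₀² ≥ (e₁-E₁)/(e₁-e₀), one has a₀β ≥ √((e₁-E₁)/(e₁-e₀)) · (√((e₁-E₂)/(e₁-e₀)) - √((E₂-e₀)/(E₁-e₀))). -/
/-- Inequality from the appendix proof of Theorem 2: with
`α = √((E₂-e₀)/(E₁-e₀))`, `β = √(α²a₀² + (1-α²)) - αa₀`,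
`e₀ < E₂ ≤ E₁ ≤ e₁`, `a₀ ∈ [0,1]` and `a₀² ≥ (e₁-E₁)/(e₁-e₀)` (Lemma 1),
one has `a₀β ≥ √((e₁-E₁)/(e₁-e₀)) · (√((e₁-E₂)/(e₁-e₀)) - √((E₂-e₀)/(E₁-e₀)))`. -/
theorem a0_beta_lower_bound (e₀ e₁ E₁ E₂ a₀ α β : ℝ)
    (h₀ : e₀ < E₂) (h₁ : E₂ ≤ E₁) (h₂ : E₁ ≤ e₁)
    (ha₀ : 0 ≤ a₀) (ha₁ : a₀ ≤ 1)
    (hLem : (e₁ - E₁) / (e₁ - e₀) ≤ a₀ ^ 2)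
    (hα : α = Real.sqrt ((E₂ - e₀) / (E₁ - e₀)))
    (hβ : β = Real.sqrt (α ^ 2 * a₀ ^ 2 + (1 - α ^ 2)) - α * a₀) :
    Real.sqrt ((e₁ - E₁) / (e₁ - e₀)) *
      (Real.sqrt ((e₁ - E₂) / (e₁ - e₀)) - Real.sqrt ((E₂ - e₀) / (E₁ - e₀)))
      ≤ a₀ * β := by
  have he : (0:ℝ) < e₁ - e₀ := by linarith
  have hE : (0:ℝ) < E₁ - e₀ := by linarith
  set q := (e₁ - E₁) / (e₁ - e₀) with hq
  set r := (e₁ - E₂) / (e₁ - e₀) with hrdef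
  have hq0 : 0 ≤ q := div_nonneg (by linarith) he.le
  have hr0 : 0 ≤ r := div_nonneg (by linarith) he.le
  have hr1 : r ≤ 1 := by rw [hrdef, div_le_one he]; linarith
  have hα0 : 0 ≤ α := hα ▸ Real.sqrt_nonneg _
  have hα2 : α ^ 2 = (E₂ - e₀) / (E₁ - e₀) := by
    rw [hα, sq, Real.mul_self_sqrt (div_nonneg (by linarith) hE.le)]
  have hα1 : α ^ 2 ≤ 1 := by rw [hα2, div_le_one hE]; linarith
  set X := α ^ 2 * a₀ ^ 2 + (1 - α ^ 2) with hX
  have hX0 : 0 ≤ X := by nlinarith [sq_nonneg α, sq_nonneg a₀]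
  -- key identity: α² q + 1 - α² = r
  have hid : α ^ 2 * q + (1 - α ^ 2) = r := by
    rw [hα2, hq, hrdef]; field_simp; ring
  have hrX : r ≤ X := by nlinarith [hα2, hid]
  set sq := Real.sqrt q with hsq
  set sr := Real.sqrt r with hsr
  set sX := Real.sqrt X with hsX
  have hsq0 : 0 ≤ sq := Real.sqrt_nonneg _
  have hsr0 : 0 ≤ sr := Real.sqrt_nonneg _
  have hsX0 : 0 ≤ sX := Real.sqrt_nonneg _
  have hsq2 : sq ^ 2 = q := Real.sq_sqrt hq0
  have hsr2 : sr ^ 2 = r := Real.sq_sqrt hr0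
  have hsX2 : sX ^ 2 = X := Real.sq_sqrt hX0
  -- a₀ ≥ sq
  have ha₀q : sq ≤ a₀ := by
    have := Real.sqrt_le_sqrt hLem
    rwa [Real.sqrt_sq ha₀] at this
  -- sr ≤ sX
  have hsrX : sr ≤ sX := Real.sqrt_le_sqrt hrX
  -- main: (sq*sr + α*a₀²) ≤ (a₀*sX + α*sq)
  have key : sq * sr + α * a₀ ^ 2 ≤ a₀ * sX + α * sq := by
    have hA0 : 0 ≤ sq * sr + α * a₀ ^ 2 := by positivity
    have hB0 : 0 ≤ a₀ * sX + α * sq := by positivity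
    have h1 : a₀ * sr ≤ sX := le_trans (mul_le_of_le_one_left hsr0 ha₁) hsrX
    have key1 : a₀ ^ 2 * sr ≤ a₀ * sX := by
      calc a₀ ^ 2 * sr = a₀ * (a₀ * sr) := by ring
        _ ≤ a₀ * sX := mul_le_mul_of_nonneg_left h1 ha₀
    have key2 : q * r ≤ (1 - α ^ 2) * a₀ ^ 2 + α ^ 2 * q := by
      nlinarith [mul_le_mul_of_nonneg_left hr1 hq0, mul_le_mul_of_nonneg_left hLem (sub_nonneg.mpr hα1)]
    have e1 : (sq * sr + α * a₀ ^ 2) ^ 2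
        = q * r + α ^ 2 * a₀ ^ 4 + 2 * α * sq * (a₀ ^ 2 * sr) := by
      rw [← hsq2, ← hsr2]; ring
    have e2 : (a₀ * sX + α * sq) ^ 2
        = a₀ ^ 2 * X + α ^ 2 * q + 2 * α * sq * (a₀ * sX) := by
      rw [← hsX2, ← hsq2]; ring
    have e3 : a₀ ^ 2 * X = α ^ 2 * a₀ ^ 4 + (1 - α ^ 2) * a₀ ^ 2 := by rw [hX]; ring
    have h3 : 2 * α * sq * (a₀ ^ 2 * sr) ≤ 2 * α * sq * (a₀ * sX) :=
      mul_le_mul_of_nonneg_left key1 (by positivity)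
    have hsqle : (sq * sr + α * a₀ ^ 2) ^ 2 ≤ (a₀ * sX + α * sq) ^ 2 := by
      rw [e1, e2]; linarith [e3, h3, key2]
    have := Real.sqrt_le_sqrt hsqle
    rwa [Real.sqrt_sq hA0, Real.sqrt_sq hB0] at this
  rw [hβ, ← hα]
  have : sq * sr - sq * α ≤ a₀ * sX - α * a₀ ^ 2 := by linarith
  calc sq * (sr - α) = sq * sr - sq * α := by ring
    _ ≤ a₀ * sX - α * a₀ ^ 2 := this
    _ = a₀ * (sX - α * a₀) := by ring
end

section
/- Define f(η) = (√(n₃)·(1/√2) + √(n₅)·√(1/4 + η) + √(n₆)·√(1/4 - η))² for η ∈ [-1/4, 1/4], where n₃, n₅, n₆ ≥ 0, n₅ + n₆ = 1 - n₃, and n₃ ∈ (1/2, 1). Then f attains its maximum at η* = (n₅ - n₆)/(4(1 - n₃)), and the maximum value is (1/2)(√n₃ + √(1-n₃))². -/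
/-!
By Cauchy–Schwarz, `√n₅ √(1/4 + η) + √n₆ √(1/4 - η) ≤ √(n₅ + n₆) √(1/2)` whenever both radicands
are nonnegative, with equality when `(1/4 + η, 1/4 - η)` is proportional to `(n₅, n₆)`, which
happens exactly at `η* = (n₅ - n₆) / (4 (n₅ + n₆))`. Since `n₅ + n₆ = 1 - n₃`, the maximum is
`(√n₃ / √2 + √(1 - n₃) / √2)²`.
-/

open Real Set

lemma sqrt_mul_sqrt_add_sqrt_mul_sqrt_le {a b x y : ℝ} (ha : 0 ≤ a) (hb : 0 ≤ b)
    (hx : 0 ≤ x) (hy : 0 ≤ y) : √a * √x + √b * √y ≤ √(a + b) * √(x + y) := by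
  simpa [Fin.forall_fin_two, ha, hb, hx, hy] using
    sum_sqrt_mul_sqrt_le Finset.univ (f := ![a, b]) (g := ![x, y])

lemma sqrt_mul_sqrt_add_sqrt_mul_sqrt_of_proportional {a b t : ℝ} (ha : 0 ≤ a) (hb : 0 ≤ b) :
    √a * √(a * (t / (a + b))) + √b * √(b * (t / (a + b))) = √(a + b) * √t := by
  rw [sqrt_mul ha, sqrt_mul hb, ← mul_assoc, ← mul_assoc, mul_self_sqrt ha, mul_self_sqrt hb,
    ← add_mul, sqrt_div' _ (add_nonneg ha hb), ← mul_div_assoc, mul_div_right_comm, div_sqrt]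

noncomputable def overlap (a b c η : ℝ) : ℝ :=
  (√a * (1 / √2) + √b * √(1 / 4 + η) + √c * √(1 / 4 - η)) ^ 2

lemma sub_div_four_mul_add_mem_Icc {b c : ℝ} (hb : 0 ≤ b) (hc : 0 ≤ c) :
    (b - c) / (4 * (b + c)) ∈ Icc (-(1 / 4) : ℝ) (1 / 4) := by
  rcases (add_nonneg hb hc).eq_or_lt with hbc | hbc
  · simp [← hbc]
  · constructor
    · rw [le_div_iff₀ (by positivity)]; linarith
    · rw [div_le_iff₀ (by positivity)]; linarith

lemma overlap_le {a b c η : ℝ} (hb : 0 ≤ b) (hc : 0 ≤ c) (hη : η ∈ Icc (-(1 / 4) : ℝ) (1 / 4)) :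
    overlap a b c η ≤ (√a * (1 / √2) + √(b + c) * √(1 / 2)) ^ 2 := by
  have hcs := sqrt_mul_sqrt_add_sqrt_mul_sqrt_le hb hc
    (by linarith [hη.1] : 0 ≤ 1 / 4 + η) (by linarith [hη.2] : 0 ≤ 1 / 4 - η)
  rw [show 1 / 4 + η + (1 / 4 - η) = (1 / 2 : ℝ) by ring] at hcs
  unfold overlap
  rw [add_assoc]
  gcongr

lemma overlap_sub_div_four_mul_add {a b c : ℝ} (hb : 0 ≤ b) (hc : 0 ≤ c) (hbc : 0 < b + c) :
    overlap a b c ((b - c) / (4 * (b + c))) = (√a * (1 / √2) + √(b + c) * √(1 / 2)) ^ 2 := by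
  have h_add : 1 / 4 + (b - c) / (4 * (b + c)) = b * (1 / 2 / (b + c)) := by
    field_simp; ring
  have h_sub : 1 / 4 - (b - c) / (4 * (b + c)) = c * (1 / 2 / (b + c)) := by
    field_simp; ring
  rw [overlap, h_add, h_sub, add_assoc, sqrt_mul_sqrt_add_sqrt_mul_sqrt_of_proportional hb hc]

theorem overlap_maximization_general (n₃ n₅ n₆ : ℝ)
    (h₅ : 0 ≤ n₅) (h₆ : 0 ≤ n₆)
    (hsum : n₅ + n₆ = 1 - n₃) (hhi : n₃ < 1) :
    (n₅ - n₆) / (4 * (1 - n₃)) ∈ Set.Icc (-(1 / 4) : ℝ) (1 / 4) ∧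
    IsMaxOn
      (fun η : ℝ => (Real.sqrt n₃ * (1 / Real.sqrt 2) +
        Real.sqrt n₅ * Real.sqrt (1 / 4 + η) +
        Real.sqrt n₆ * Real.sqrt (1 / 4 - η)) ^ 2)
      (Set.Icc (-(1 / 4) : ℝ) (1 / 4)) ((n₅ - n₆) / (4 * (1 - n₃))) ∧
    (fun η : ℝ => (Real.sqrt n₃ * (1 / Real.sqrt 2) +
        Real.sqrt n₅ * Real.sqrt (1 / 4 + η) +
        Real.sqrt n₆ * Real.sqrt (1 / 4 - η)) ^ 2)
      ((n₅ - n₆) / (4 * (1 - n₃))) =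
      (1 / 2) * (Real.sqrt n₃ + Real.sqrt (1 - n₃)) ^ 2 := by
  change _ ∧ IsMaxOn (overlap n₃ n₅ n₆) _ _ ∧ overlap n₃ n₅ n₆ _ = _
  rw [← hsum]
  have hpos : 0 < n₅ + n₆ := by linarith
  have hpeak := overlap_sub_div_four_mul_add (a := n₃) h₅ h₆ hpos
  refine ⟨sub_div_four_mul_add_mem_Icc h₅ h₆,
    fun η hη ↦ (overlap_le h₅ h₆ hη).trans_eq hpeak.symm, hpeak.trans ?_⟩
  rw [one_div 2, sqrt_inv]
  field_simp
  rw [sq_sqrt zero_le_two]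

/-- Maximization of the overlap `|⟨Ψ_BD|Ψ_s(η)⟩|²`: the function
`f(η) = (√n₃·(1/√2) + √n₅·√(1/4+η) + √n₆·√(1/4-η))²` on `[-1/4, 1/4]`
attains its maximum at `η* = (n₅ - n₆)/(4(1-n₃))`, with maximum value
`(1/2)(√n₃ + √(1-n₃))²`. -/
theorem overlap_maximization (n₃ n₅ n₆ : ℝ)
    (h₃ : 0 ≤ n₃) (h₅ : 0 ≤ n₅) (h₆ : 0 ≤ n₆)
    (hsum : n₅ + n₆ = 1 - n₃) (hlo : 1 / 2 < n₃) (hhi : n₃ < 1) :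
    (n₅ - n₆) / (4 * (1 - n₃)) ∈ Set.Icc (-(1 / 4) : ℝ) (1 / 4) ∧
    IsMaxOn
      (fun η : ℝ => (Real.sqrt n₃ * (1 / Real.sqrt 2) +
        Real.sqrt n₅ * Real.sqrt (1 / 4 + η) +
        Real.sqrt n₆ * Real.sqrt (1 / 4 - η)) ^ 2)
      (Set.Icc (-(1 / 4) : ℝ) (1 / 4)) ((n₅ - n₆) / (4 * (1 - n₃))) ∧
    (fun η : ℝ => (Real.sqrt n₃ * (1 / Real.sqrt 2) +
        Real.sqrt n₅ * Real.sqrt (1 / 4 + η) +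
        Real.sqrt n₆ * Real.sqrt (1 / 4 - η)) ^ 2)
      ((n₅ - n₆) / (4 * (1 - n₃))) =
      (1 / 2) * (Real.sqrt n₃ + Real.sqrt (1 - n₃)) ^ 2 :=
  overlap_maximization_general n₃ n₅ n₆ h₅ h₆ hsum hhi
end

section
/- Let n₁ ≥ n₂ ≥ n₃ ≥ 1/2 with n₁ ≤ 1 and n₁ + n₂ + n₄ = 2, where n₄ = 1 - n₃, i.e., n₁ + n₂ - n₃ = 1. Then the minimum over η ∈ [0, 1/4] of d(η) = 2(|n₁ - 3/4 - η| + |n₂ - 3/4 + η| + |n₃ - 1/2|) equals 4(n₃ - 1/2). -/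
/-- The minimum over `η ∈ [0, 1/4]` of the l¹-distance
`d(η) = 2(|n₁ - 3/4 - η| + |n₂ - 3/4 + η| + |n₃ - 1/2|)` from a point of the
hyperplane `A₁` (i.e. `n₁ + n₂ - n₃ = 1`, decreasingly ordered, `n₃ ≥ 1/2`,
`n₁ ≤ 1`) to the static line equals `4(n₃ - 1/2)`. -/
theorem static_l1_distance_min (n₁ n₂ n₃ : ℝ)
    (h₁ : n₁ ≤ 1) (h₁₂ : n₂ ≤ n₁) (h₂₃ : n₃ ≤ n₂) (h₃ : 1 / 2 ≤ n₃)
    (hA₁ : n₁ + n₂ - n₃ = 1) :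
    IsLeast
      ((fun η : ℝ => 2 * (|n₁ - 3 / 4 - η| + |n₂ - 3 / 4 + η| + |n₃ - 1 / 2|))
        '' Set.Icc (0 : ℝ) (1 / 4))
      (4 * (n₃ - 1 / 2)) := by
  constructor
  · refine ⟨max 0 (3 / 4 - n₂), ⟨le_max_left _ _, max_le (by norm_num) (by linarith)⟩, ?_⟩
    have hη₁ : max 0 (3 / 4 - n₂) ≤ n₁ - 3 / 4 := max_le (by linarith) (by linarith)
    have hη₂ : 3 / 4 - n₂ ≤ max 0 (3 / 4 - n₂) := le_max_right _ _
    simp only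
    rw [abs_of_nonneg (by linarith), abs_of_nonneg (by linarith),
      abs_of_nonneg (by linarith)]
    linarith
  · rintro y ⟨η, hη, rfl⟩
    have a1 : n₁ - 3 / 4 - η ≤ |n₁ - 3 / 4 - η| := le_abs_self _
    have a2 : n₂ - 3 / 4 + η ≤ |n₂ - 3 / 4 + η| := le_abs_self _
    have a3 : |n₃ - 1 / 2| = n₃ - 1 / 2 := abs_of_nonneg (by linarith)
    simp only
    rw [a3]
    linarith
end

section
/- Let n₁ ≥ n₂ ≥ n₃ ≥ 1/2, n₁ ≤ 1, and n₁ + n₂ - n₃ = 1. Set η* = (n₁ - n₂)/(4(1 - n₃)) when n₃ < 1. Then 3/4 + η* ≤ n₁ and 3/4 - η* ≤ n₂, and consequently 2((n₁ - 3/4 - η*) + (n₂ - 3/4 + η*) + (n₃ - 1/2)) = 4(n₃ - 1/2). -/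
/-- The overlap-optimal `η* = (n₁ - n₂)/(4(1 - n₃))` also minimizes the
l¹-distance to the static line: `3/4 + η* ≤ n₁`, `3/4 - η* ≤ n₂`, and
`2((n₁ - 3/4 - η*) + (n₂ - 3/4 + η*) + (n₃ - 1/2)) = 4(n₃ - 1/2)`. -/
theorem etaStar_minimizes_l1 (n₁ n₂ n₃ : ℝ)
    (h₁ : n₁ ≤ 1) (h₁₂ : n₂ ≤ n₁) (h₂₃ : n₃ ≤ n₂) (h₃ : 1 / 2 ≤ n₃)
    (h₃' : n₃ < 1) (hA₁ : n₁ + n₂ - n₃ = 1) :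
    3 / 4 + (n₁ - n₂) / (4 * (1 - n₃)) ≤ n₁ ∧
    3 / 4 - (n₁ - n₂) / (4 * (1 - n₃)) ≤ n₂ ∧
    2 * ((n₁ - 3 / 4 - (n₁ - n₂) / (4 * (1 - n₃))) +
        (n₂ - 3 / 4 + (n₁ - n₂) / (4 * (1 - n₃))) + (n₃ - 1 / 2)) =
      4 * (n₃ - 1 / 2) := by
  have hpos : (0:ℝ) < 4 * (1 - n₃) := by linarith
  have key : (n₁ - n₂) / (4 * (1 - n₃)) ≤ n₁ - 3 / 4 := by
    rw [div_le_iff₀ hpos]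
    nlinarith [mul_nonneg (sub_nonneg.2 h₁) (by linarith : (0:ℝ) ≤ 2*n₃ - 1)]
  have key2 : 3 / 4 - n₂ ≤ (n₁ - n₂) / (4 * (1 - n₃)) := by
    rw [le_div_iff₀ hpos]
    nlinarith [mul_nonneg (sub_nonneg.2 h₁) (by linarith : (0:ℝ) ≤ 2*n₃ - 1)]
  refine ⟨by linarith, by linarith, ?_⟩
  ring_nf
  linarith
end

section
/- For a unit vector Ψ ∈ Λ^N(ℂ^d) with natural occupation numbers n (eigenvalues of its one-particle reduced density matrix), and any Slater determinant e_{i₁}∧⋯∧e_{i_N} built from the natural orbitals with index set I = {i₁,…,i_N}, the overlap satisfies δ_I(n)/(2 min(N, d-N)) ≤ 1 - |⟨e_{i₁}∧⋯∧e_{i_N}, Ψ⟩|² ≤ δ_I(n)/2, where δ_I(n) = Σ_{i∈I}(1-nᵢ) + Σ_{i∉I} nᵢ. -/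
/-- Sign picked up by a fermionic ladder operator acting on the Slater
determinant labelled by the occupied set `s` at orbital `i`. -/
def fermiSign {d : ℕ} (s : Finset (Fin d)) (i : Fin d) : ℂ :=
  (-1 : ℂ) ^ (s.filter (fun k => k < i)).card

/-- One-particle reduced density matrix `ρ i j = ⟨Ψ| a†_j a_i |Ψ⟩` of a state
`Ψ` given by its coefficients in the Slater-determinant basis of `Λ^N(ℂ^d)`. -/
noncomputable def oneRDM (d : ℕ) (Ψ : Finset (Fin d) → ℂ) :
    Matrix (Fin d) (Fin d) ℂ := fun i j =>
  ∑ s : Finset (Fin d),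
    if i ∈ s ∧ j ∉ s.erase i then
      (starRingEnd ℂ) (Ψ (insert j (s.erase i))) * Ψ s *
        fermiSign s i * fermiSign (s.erase i) j
    else 0

/-!
The diagonal of the one-particle reduced density matrix in the Slater-determinant basis is
`n i = ∑_{s ∋ i} |Ψ s|²`, so the natural occupation numbers are the one-site marginals of the
probability distribution `p s = |Ψ s|²` on `N`-element subsets of orbitals. Summing the marginals
turns `δ_I(n)` into the expected size `∑ₛ p s · |I ∆ s|` of the symmetric difference with `I`.
For `|s| = |I|` this size vanishes only at `s = I`, and otherwise lies between `2` and
`2 min(N, d - N)`; so `δ_I(n)` lies between `2 (1 - p I)` and `2 min(N, d - N) (1 - p I)`.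
-/

open Finset
open scoped symmDiff

lemma fermiSign_mul_self {d : ℕ} (s : Finset (Fin d)) (i : Fin d) :
    fermiSign s i * fermiSign s i = 1 := by
  rw [fermiSign, ← pow_add, ← two_mul, pow_mul]
  norm_num

lemma fermiSign_erase_self {d : ℕ} (s : Finset (Fin d)) (i : Fin d) :
    fermiSign (s.erase i) i = fermiSign s i := by
  unfold fermiSign
  congr 2
  ext k
  simp only [mem_filter, mem_erase]
  exact ⟨fun h => ⟨h.1.2, h.2⟩, fun h => ⟨⟨h.2.ne, h.1⟩, h.2⟩⟩

lemma oneRDM_apply_self (d : ℕ) (Ψ : Finset (Fin d) → ℂ) (i : Fin d) :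
    oneRDM d Ψ i i = ((∑ s with i ∈ s, ‖Ψ s‖ ^ 2 : ℝ) : ℂ) := by
  rw [oneRDM, sum_filter]
  push_cast
  refine sum_congr rfl fun s _ => ?_
  by_cases hi : i ∈ s
  · rw [if_pos ⟨hi, notMem_erase i s⟩, if_pos hi, insert_erase hi, fermiSign_erase_self,
      mul_assoc, fermiSign_mul_self, mul_one, mul_comm, Complex.mul_conj,
      Complex.normSq_eq_norm_sq]
  · simp [hi]

section SymmDiff

variable {α : Type*} [DecidableEq α] {s t : Finset α}

theorem Finset.card_symmDiff (s t : Finset α) : #(s ∆ t) = #(s \ t) + #(t \ s) := by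
  rw [symmDiff_def, sup_eq_union, card_union_of_disjoint disjoint_sdiff_sdiff]

lemma two_le_card_symmDiff (hst : s ≠ t) (hcard : #s = #t) : 2 ≤ #(s ∆ t) := by
  have hne : (s \ t).Nonempty := by
    rw [nonempty_iff_ne_empty, Ne, sdiff_eq_empty_iff_subset]
    exact fun hsub => hst (eq_of_subset_of_card_le hsub hcard.ge)
  rw [card_symmDiff, ← card_sdiff_comm hcard]
  have := hne.card_pos
  omega

lemma card_symmDiff_le_two_mul_min [Fintype α] (hcard : #s = #t) :
    #(s ∆ t) ≤ 2 * min #s #sᶜ := by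
  have hs : #(t \ s) ≤ #s := card_sdiff_comm hcard ▸ card_le_card sdiff_subset
  have ht : #(t \ s) ≤ #sᶜ := card_le_card fun x hx => mem_compl.2 (mem_sdiff.1 hx).2
  rw [card_symmDiff, card_sdiff_comm hcard]
  omega

end SymmDiff

lemma sum_one_sub_add_sum_compl_eq_sum_mul_card_symmDiff
    {α : Type*} [Fintype α] [DecidableEq α] (p : Finset α → ℝ) (hp : ∑ s, p s = 1)
    (n : α → ℝ) (hn : ∀ i, n i = ∑ s with i ∈ s, p s) (I : Finset α) :
    ∑ i ∈ I, (1 - n i) + ∑ i ∈ Iᶜ, n i = ∑ s, p s * #(I ∆ s) := by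
  have hvacant : ∀ i, 1 - n i = ∑ s with i ∉ s, p s := fun i => by
    rw [hn, ← hp, ← sum_filter_add_sum_filter_not univ (i ∈ ·)]
    ring
  have hI : ∑ i ∈ I, (1 - n i) = ∑ s, p s * #(I \ s) := by
    simp_rw [hvacant, sum_filter]
    rw [sum_comm]
    refine sum_congr rfl fun s _ => ?_
    rw [← sum_filter, sum_const, nsmul_eq_mul, mul_comm, filter_notMem_eq_sdiff]
  have hIc : ∑ i ∈ Iᶜ, n i = ∑ s, p s * #(s \ I) := by
    simp_rw [hn, sum_filter]
    rw [sum_comm]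
    refine sum_congr rfl fun s _ => ?_
    rw [← sum_filter, sum_const, nsmul_eq_mul, mul_comm, filter_mem_eq_inter, inter_comm,
      ← sdiff_eq_inter_compl]
  rw [hI, hIc, ← sum_add_distrib]
  refine sum_congr rfl fun s _ => ?_
  rw [card_symmDiff]
  push_cast
  ring

section Expectation

variable {β : Type*} [Fintype β] [DecidableEq β] {p f : β → ℝ} {x : β}

lemma one_sub_eq_sum_erase (hp : ∑ y, p y = 1) : 1 - p x = ∑ y ∈ univ.erase x, p y := by
  rw [← hp, ← add_sum_erase univ p (mem_univ x)]
  ring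

lemma sum_mul_eq_sum_erase (hfx : f x = 0) :
    ∑ y, p y * f y = ∑ y ∈ univ.erase x, p y * f y :=
  (sum_erase univ (by simp [hfx])).symm

lemma mul_one_sub_le_sum_mul {a : ℝ} (hp : ∑ y, p y = 1) (hp0 : ∀ y, 0 ≤ p y) (hfx : f x = 0)
    (ha : ∀ y ≠ x, p y ≠ 0 → a ≤ f y) :
    a * (1 - p x) ≤ ∑ y, p y * f y := by
  rw [one_sub_eq_sum_erase hp, mul_sum, sum_mul_eq_sum_erase hfx]
  refine sum_le_sum fun y hy => ?_
  by_cases hpy : p y = 0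
  · simp [hpy]
  · rw [mul_comm]
    exact mul_le_mul_of_nonneg_left (ha y (ne_of_mem_erase hy) hpy) (hp0 y)

lemma sum_mul_le_mul_one_sub {b : ℝ} (hp : ∑ y, p y = 1) (hp0 : ∀ y, 0 ≤ p y) (hfx : f x = 0)
    (hb : ∀ y ≠ x, p y ≠ 0 → f y ≤ b) :
    ∑ y, p y * f y ≤ b * (1 - p x) := by
  rw [one_sub_eq_sum_erase hp, mul_sum, sum_mul_eq_sum_erase hfx]
  refine sum_le_sum fun y hy => ?_
  by_cases hpy : p y = 0
  · simp [hpy]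
  · rw [mul_comm b]
    exact mul_le_mul_of_nonneg_left (hb y (ne_of_mem_erase hy) hpy) (hp0 y)

end Expectation

theorem overlap_l1_bounds_general (N d : ℕ)
    (Ψ : Finset (Fin d) → ℂ)
    (hsupp : ∀ s : Finset (Fin d), Ψ s ≠ 0 → s.card = N)
    (hnorm : ∑ s : Finset (Fin d), ‖Ψ s‖ ^ 2 = 1)
    (n : Fin d → ℝ)
    (hdiag : oneRDM d Ψ = Matrix.diagonal (fun i => ((n i : ℝ) : ℂ)))
    (I : Finset (Fin d)) (hI : I.card = N) :
    (∑ i ∈ I, (1 - n i) + ∑ i ∈ Iᶜ, n i) / (2 * min N (d - N)) ≤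
        1 - ‖Ψ I‖ ^ 2 ∧
      1 - ‖Ψ I‖ ^ 2 ≤
        (∑ i ∈ I, (1 - n i) + ∑ i ∈ Iᶜ, n i) / 2 := by
  set p : Finset (Fin d) → ℝ := fun s => ‖Ψ s‖ ^ 2
  have hp0 : ∀ s, 0 ≤ p s := fun s => sq_nonneg _
  have hn : ∀ i, n i = ∑ s with i ∈ s, p s := fun i => by
    have := congrFun (congrFun hdiag i) i
    rw [oneRDM_apply_self, Matrix.diagonal_apply_eq] at this
    exact_mod_cast this.symm
  have hcard : ∀ s, p s ≠ 0 → #I = #s := fun s hs =>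
    hI.trans (hsupp s fun h => hs (by simp [p, h])).symm
  have hIc : #Iᶜ = d - N := by rw [card_compl, Fintype.card_fin, hI]
  have hpI : p I ≤ 1 := hnorm ▸ single_le_sum (fun s _ => hp0 s) (mem_univ I)
  have hlow : 2 * (1 - p I) ≤ ∑ s, p s * #(I ∆ s) :=
    mul_one_sub_le_sum_mul hnorm hp0 (by simp) fun s hs hps => by
      exact_mod_cast two_le_card_symmDiff (Ne.symm hs) (hcard s hps)
  have hup : ∑ s, p s * #(I ∆ s) ≤ 2 * (min N (d - N) : ℕ) * (1 - p I) :=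
    sum_mul_le_mul_one_sub hnorm hp0 (by simp) fun s _ hps => by
      have := card_symmDiff_le_two_mul_min (hcard s hps)
      rw [hI, hIc] at this
      exact_mod_cast this
  change _ ≤ 1 - p I ∧ 1 - p I ≤ _
  rw [sum_one_sub_add_sum_compl_eq_sum_mul_card_symmDiff p hnorm n hn I]
  exact ⟨div_le_of_le_mul₀ (by positivity) (by linarith) (by linarith), by linarith⟩

/-- Bound of Schilling et al. (Ref. [CS2013]): for a unit vector
`Ψ ∈ Λ^N(ℂ^d)` expanded in its own natural-orbital basis (so that its
one-particle reduced density matrix is diagonal with natural occupation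
numbers `n i`), and any natural-orbital Slater determinant with occupied set
`I` of size `N`, the squared overlap `|⟨e_I, Ψ⟩|² = |Ψ I|²` satisfies
`δ_I(n)/(2 min(N, d-N)) ≤ 1 - |Ψ I|² ≤ δ_I(n)/2`, where
`δ_I(n) = ∑_{i∈I}(1-nᵢ) + ∑_{i∉I} nᵢ`. -/
theorem overlap_l1_bounds (N d : ℕ) (hN : 0 < N) (hNd : N < d)
    (Ψ : Finset (Fin d) → ℂ)
    (hsupp : ∀ s : Finset (Fin d), Ψ s ≠ 0 → s.card = N)
    (hnorm : ∑ s : Finset (Fin d), ‖Ψ s‖ ^ 2 = 1)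
    (n : Fin d → ℝ)
    (hdiag : oneRDM d Ψ = Matrix.diagonal (fun i => ((n i : ℝ) : ℂ)))
    (I : Finset (Fin d)) (hI : I.card = N) :
    (∑ i ∈ I, (1 - n i) + ∑ i ∈ Iᶜ, n i) / (2 * min N (d - N)) ≤
        1 - ‖Ψ I‖ ^ 2 ∧
      1 - ‖Ψ I‖ ^ 2 ≤
        (∑ i ∈ I, (1 - n i) + ∑ i ∈ Iᶜ, n i) / 2 :=
  overlap_l1_bounds_general N d Ψ hsupp hnorm n hdiag I hI
end
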